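/- arXiv:2003.02748 — 2 statements merged into one kernel-verified Lean document; each statement's English description precedes it below -/
import Mathlib

section
/- For every natural number n ≥ 152 and every j with 1 ≤ j ≤ ⌊(n-1)/2⌋, one has (n - j) · binom(n-1, ⌊(n-1)/2⌋) > 4 · (n - 2·j) · binom(n-1, j). -/
/-!
Write `d = n - 2j`. If `7d < n`, then `4d < n - j` and `C(n-1, j)` is at most the middle
binomial coefficient, so the inequality is immediate. Otherwise `n ≥ 152` forces `d ≥ 22`,
hence `d² ≥ n + 2d`, which is exactly the condition under which
`(n - 2j) C(n-1, j) / (n - j)` does not decrease from `j` to `j + 1`; so the inequality at `j`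
follows from the one at `j + 1`. Descending induction from `j = ⌊(n-1)/2⌋`, where `d ≤ 2`,
finishes the proof.
-/

open Nat

def HookBound (n j : ℕ) : Prop :=
  4 * (n - 2 * j) * choose (n - 1) j < (n - j) * choose (n - 1) ((n - 1) / 2)

theorem hookBound_of_seven_mul_lt {n j : ℕ} (hj : 2 * j ≤ n) (h : 7 * (n - 2 * j) < n) :
    HookBound n j :=
  calc 4 * (n - 2 * j) * choose (n - 1) j
      ≤ 4 * (n - 2 * j) * choose (n - 1) ((n - 1) / 2) :=
        Nat.mul_le_mul_left _ (choose_le_middle j (n - 1))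
    _ < (n - j) * choose (n - 1) ((n - 1) / 2) :=
        Nat.mul_lt_mul_of_pos_right (by omega) (choose_pos (Nat.div_le_self _ _))

theorem sub_two_mul_mul_choose_le_succ {n j : ℕ} (hj : 2 * j < n)
    (hd : n + 2 * (n - 2 * j) ≤ (n - 2 * j) ^ 2) :
    (n - 2 * j) * choose (n - 1) j * (n - (j + 1)) ≤
      (n - 2 * (j + 1)) * choose (n - 1) (j + 1) * (n - j) := by
  have hd3 : 3 ≤ n - 2 * j := by nlinarith [Nat.sub_pos_of_lt hj]
  -- with `d = n - 2j`, the difference of the two coefficients below is `d² - n - 2d`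
  have hcoeff : (n - 2 * j) * (j + 1) ≤ (n - 2 * (j + 1)) * (n - j) := by
    zify [show 2 * (j + 1) ≤ n by omega, show 2 * j ≤ n by omega, show j ≤ n by omega] at hd ⊢
    nlinarith
  calc (n - 2 * j) * choose (n - 1) j * (n - (j + 1))
      = (n - 2 * j) * (j + 1) * choose (n - 1) (j + 1) := by
        rw [show n - (j + 1) = n - 1 - j by omega, mul_assoc, ← choose_succ_right_eq]; ring
    _ ≤ (n - 2 * (j + 1)) * (n - j) * choose (n - 1) (j + 1) := Nat.mul_le_mul_right _ hcoeff
    _ = (n - 2 * (j + 1)) * choose (n - 1) (j + 1) * (n - j) := by ring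

theorem hookBound_of_succ {n j : ℕ} (hj : 2 * j < n)
    (hd : n + 2 * (n - 2 * j) ≤ (n - 2 * j) ^ 2) (h : HookBound n (j + 1)) : HookBound n j := by
  refine lt_of_mul_lt_mul_right (a := n - (j + 1)) ?_ (Nat.zero_le _)
  calc 4 * (n - 2 * j) * choose (n - 1) j * (n - (j + 1))
      ≤ 4 * ((n - 2 * (j + 1)) * choose (n - 1) (j + 1) * (n - j)) := by
        rw [mul_assoc 4, mul_assoc 4]
        exact Nat.mul_le_mul_left 4 (sub_two_mul_mul_choose_le_succ hj hd)
    _ = 4 * (n - 2 * (j + 1)) * choose (n - 1) (j + 1) * (n - j) := by ring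
    _ < (n - (j + 1)) * choose (n - 1) ((n - 1) / 2) * (n - j) :=
        Nat.mul_lt_mul_of_pos_right h (by omega)
    _ = (n - j) * choose (n - 1) ((n - 1) / 2) * (n - (j + 1)) := by ring

theorem stmt5_general (n j : ℕ) (hn : 152 ≤ n) (hj2 : j ≤ (n - 1) / 2) :
    4 * (n - 2 * j) * Nat.choose (n - 1) j < (n - j) * Nat.choose (n - 1) ((n - 1) / 2) := by
  induction hj2 using Nat.decreasingInduction with
  | self => exact hookBound_of_seven_mul_lt (by omega) (by omega)
  | of_succ k hk ih =>
    by_cases hsmall : 7 * (n - 2 * k) < n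
    · exact hookBound_of_seven_mul_lt (by omega) hsmall
    · have hd : 22 ≤ n - 2 * k := by omega
      exact hookBound_of_succ (by omega) (by nlinarith) ih

theorem stmt5 (n j : ℕ) (hn : 152 ≤ n) (hj1 : 1 ≤ j) (hj2 : j ≤ (n - 1) / 2) :
    4 * (n - 2 * j) * Nat.choose (n - 1) j < (n - j) * Nat.choose (n - 1) ((n - 1) / 2) :=
  stmt5_general n j hn hj2
end

section
/- Let p = 3 and n ≥ 13, and let μ be a 3-restricted 3-strict partition of n with largest part μ_1 ≤ 4 and μ ≠ β_n. Then μ_1 = 4 and (μ_2, μ_3, ..., μ_h) = β_{n-4}, i.e. μ = (4, 3^{d}, e) where n - 4 = 3d + e with 0 < e < 3, or μ = (4, 3^{d-1}, 2, 1) when 3 ∣ n - 4. -/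
/-!
A 3-restricted 3-strict partition whose first part is at most 3 is determined by its first part:
a part `3` must be followed by a positive part of size at most `3`, a part `2` only by `1` (or
nothing), and a part `1` only by nothing. Hence such a partition is `3, 3, …, 3` followed by
`2, 1`, `2` or `1`, which is `β_n`. If the first part is `4`, the next part exists and is at
most `3`, so the remaining parts form `β_{n-4}`.
-/

/-- The list of parts of the partition `β_m` for `p = 3`: `(3^d, e)` if `m = 3d + e` with
`0 < e < 3`, and `(3^{d-1}, 2, 1)` if `3 ∣ m`. -/
def betaList3 (m : ℕ) : List ℕ :=
  if m % 3 > 0 then List.replicate (m / 3) 3 ++ [m % 3]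
  else List.replicate (m / 3 - 1) 3 ++ [2, 1]

theorem betaList3_add_three {m : ℕ} (hm : 0 < m) : betaList3 (m + 3) = 3 :: betaList3 m := by
  have hmod : (m + 3) % 3 = m % 3 := Nat.add_mod_right m 3
  have hdiv : (m + 3) / 3 = m / 3 + 1 := Nat.add_div_right m (by norm_num)
  unfold betaList3
  rw [hmod, hdiv]
  split_ifs
  · rfl
  · rw [show m / 3 + 1 - 1 = m / 3 - 1 + 1 by omega]
    rfl

/-- The parts of a 3-restricted 3-strict partition, listed with a trailing `0` implicit. -/
structure IsRestrictedStrict3 (l : List ℕ) : Prop where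
  pos : ∀ x ∈ l, 0 < x
  antitone : ∀ i, i + 1 < l.length → l.getD (i + 1) 0 ≤ l.getD i 0
  gap : ∀ i < l.length,
    1 - (if 3 ∣ l.getD i 0 then 1 else 0) ≤ l.getD i 0 - l.getD (i + 1) 0 ∧
    l.getD i 0 - l.getD (i + 1) 0 ≤ 3 - (if 3 ∣ l.getD i 0 then 1 else 0)

namespace IsRestrictedStrict3

variable {a : ℕ} {l : List ℕ}

theorem tail (h : IsRestrictedStrict3 (a :: l)) : IsRestrictedStrict3 l where
  pos x hx := h.pos x (List.mem_cons_of_mem a hx)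
  antitone i hi := by simpa using h.antitone (i + 1) (by simpa using hi)
  gap i hi := by simpa using h.gap (i + 1) (by simpa using hi)

theorem gap_head_of_not_dvd (h : IsRestrictedStrict3 (a :: l)) (ha : ¬ 3 ∣ a) :
    1 ≤ a - l.getD 0 0 ∧ a - l.getD 0 0 ≤ 3 := by
  simpa [ha] using h.gap 0 (by simp)

theorem gap_head_of_dvd (h : IsRestrictedStrict3 (a :: l)) (ha : 3 ∣ a) :
    a - l.getD 0 0 ≤ 2 := by
  simpa [ha] using (h.gap 0 (by simp)).2

theorem eq_nil_of_head_eq_one (h : IsRestrictedStrict3 (1 :: l)) : l = [] := by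
  rcases l with _ | ⟨b, l⟩
  · rfl
  · have hb : 0 < b := h.pos b (by simp)
    have := h.gap_head_of_not_dvd (by norm_num)
    simp only [List.getD_cons_zero] at this
    omega

theorem eq_betaList3_sum (h : IsRestrictedStrict3 l) (hne : l ≠ []) (hhead : l.getD 0 0 ≤ 3) :
    l = betaList3 l.sum := by
  induction l with
  | nil => exact absurd rfl hne
  | cons a l ih =>
    have ha : 0 < a := h.pos a (by simp)
    simp only [List.getD_cons_zero] at hhead
    interval_cases a
    · rw [h.eq_nil_of_head_eq_one]
      rfl
    · rcases l with _ | ⟨b, l⟩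
      · rfl
      · have hb : 0 < b := h.pos b (by simp)
        have hgap := h.gap_head_of_not_dvd (by norm_num)
        simp only [List.getD_cons_zero] at hgap
        obtain rfl : b = 1 := by omega
        rw [h.tail.eq_nil_of_head_eq_one]
        rfl
    · rcases l with _ | ⟨b, l⟩
      · simpa using h.gap_head_of_dvd (dvd_refl 3)
      · have hb : 0 < b := h.pos b (by simp)
        have hb3 : b ≤ 3 := by simpa using h.antitone 0 (by simp)
        have hl := ih h.tail (List.cons_ne_nil b l) (by simpa using hb3)
        have hsum : (b :: l).sum + 3 = (3 :: b :: l).sum := by simp [Nat.add_comm]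
        rw [← hsum, betaList3_add_three (by rw [List.sum_cons]; omega), ← hl]

end IsRestrictedStrict3

theorem stmt12_general (n : ℕ) (l : List ℕ) (hne : l ≠ [])
    (hpos : ∀ x ∈ l, 0 < x)
    (hdec : ∀ i, i + 1 < l.length → l.getD (i + 1) 0 ≤ l.getD i 0)
    (hRP : ∀ i < l.length,
      1 - (if 3 ∣ l.getD i 0 then 1 else 0) ≤ l.getD i 0 - l.getD (i + 1) 0 ∧
      l.getD i 0 - l.getD (i + 1) 0 ≤ 3 - (if 3 ∣ l.getD i 0 then 1 else 0))
    (hsum : l.sum = n)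
    (hhead : l.getD 0 0 ≤ 4)
    (hnb : l ≠ betaList3 n) :
    l = 4 :: betaList3 (n - 4) := by
  have h : IsRestrictedStrict3 l := ⟨hpos, hdec, hRP⟩
  obtain ⟨a, l, rfl⟩ := List.exists_cons_of_ne_nil hne
  obtain rfl : a = 4 := by
    by_contra ha
    have ha3 : a ≤ 3 := by simp only [List.getD_cons_zero] at hhead; omega
    exact hnb (hsum ▸ h.eq_betaList3_sum hne ha3)
  have hgap := h.gap_head_of_not_dvd (by norm_num)
  rcases l with _ | ⟨b, l⟩
  · simp at hgap
  · have hb : b ≤ 3 := by simp only [List.getD_cons_zero] at hgap; omega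
    rw [h.tail.eq_betaList3_sum (List.cons_ne_nil b l) hb]
    simp only [List.sum_cons] at hsum ⊢
    congr 2
    omega

theorem stmt12 (n : ℕ) (hn : 13 ≤ n) (l : List ℕ) (hne : l ≠ [])
    (hpos : ∀ x ∈ l, 0 < x)
    (hdec : ∀ i, i + 1 < l.length → l.getD (i + 1) 0 ≤ l.getD i 0)
    (hRP : ∀ i < l.length,
      1 - (if 3 ∣ l.getD i 0 then 1 else 0) ≤ l.getD i 0 - l.getD (i + 1) 0 ∧
      l.getD i 0 - l.getD (i + 1) 0 ≤ 3 - (if 3 ∣ l.getD i 0 then 1 else 0))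
    (hsum : l.sum = n)
    (hhead : l.getD 0 0 ≤ 4)
    (hnb : l ≠ betaList3 n) :
    l = 4 :: betaList3 (n - 4) :=
  stmt12_general n l hne hpos hdec hRP hsum hhead hnb
end
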